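/- For a compound geometrically uniform state set with W = Σ_{i,k} U_iφ_kφ_k*U_i* positive definite, the least-squares measurement factors are compound geometrically uniform with the same generating group: μ_{ik} := W^{-1/2}U_iφ_k = U_iμ_k where μ_k = W^{-1/2}φ_k; hence the LSM operators satisfy Σ_{ik} = μ_{ik}μ_{ik}* = U_i(μ_kμ_k*)U_i*. -/

import Mathlib

open Matrix
open scoped ComplexOrder

noncomputable def Matrix.PosSemidef.sqrt {n 𝕜 : Type*} [Fintype n] [RCLike 𝕜] [DecidableEq n]
    {A : Matrix n n 𝕜} (hA : A.PosSemidef) : Matrix n n 𝕜 :=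
  hA.1.eigenvectorUnitary.1 * diagonal ((↑) ∘ (√·) ∘ hA.1.eigenvalues) *
  (star hA.1.eigenvectorUnitary : Matrix n n 𝕜)

section
open scoped MatrixOrder

theorem Matrix.PosSemidef.sqrt_eq_cfc_sqrt' {n : Type*} [Fintype n] [DecidableEq n]
    {A : Matrix n n ℂ} (hA : A.PosSemidef) : hA.sqrt = CFC.sqrt A := by
  rw [CFC.sqrt_eq_real_sqrt A hA.nonneg, cfcₙ_eq_cfc, hA.1.cfc_eq, Matrix.IsHermitian.cfc,
    Unitary.conjStarAlgAut_apply, Matrix.PosSemidef.sqrt]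

theorem Matrix.PosSemidef.posSemidef_sqrt' {n : Type*} [Fintype n] [DecidableEq n]
    {A : Matrix n n ℂ} (hA : A.PosSemidef) : hA.sqrt.PosSemidef := by
  rw [hA.sqrt_eq_cfc_sqrt']
  exact (CFC.sqrt_nonneg A).posSemidef

theorem Matrix.PosSemidef.sqrt_mul_self' {n : Type*} [Fintype n] [DecidableEq n]
    {A : Matrix n n ℂ} (hA : A.PosSemidef) : hA.sqrt * hA.sqrt = A := by
  rw [hA.sqrt_eq_cfc_sqrt']
  exact CFC.sqrt_mul_sqrt_self A hA.nonneg

theorem Matrix.PosSemidef.eq_sqrt_of_sq_eq' {n : Type*} [Fintype n] [DecidableEq n]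
    {A B : Matrix n n ℂ} (hB : B.PosSemidef) (hA : A.PosSemidef) (h : B ^ 2 = A) :
    B = hA.sqrt := by
  rw [hA.sqrt_eq_cfc_sqrt']
  exact (CFC.sqrt_unique (by rw [← pow_two, h]) hB.nonneg).symm

end

/-- for a compound geometrically uniform state set with
`W = ∑_{i,k} U_i φ_k φ_k* U_i*` positive definite, the LSM factors are compound
geometrically uniform with the same generating group:
`μ_{ik} = W^{-1/2} U_i φ_k = U_i μ_k` with `μ_k = W^{-1/2} φ_k`, hence the LSM operators
satisfy `Σ_{ik} = μ_{ik} μ_{ik}* = U_i (μ_k μ_k*) U_i*`. -/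
theorem cgu_lsm_factors_are_cgu (n l r : ℕ) [NeZero l] (c : Fin r → ℕ)
    (U : Fin l → Matrix (Fin n) (Fin n) ℂ)
    (hUunit : ∀ i, U i ∈ Matrix.unitaryGroup (Fin n) ℂ)
    (hUinj : Function.Injective U)
    (hUone : U 0 = 1)
    (hUmul : ∀ i j, ∃ t, U i * U j = U t)
    (hUinv : ∀ i, ∃ j, (U i)ᴴ = U j)
    (φ : (k : Fin r) → Matrix (Fin n) (Fin (c k)) ℂ)
    (W : Matrix (Fin n) (Fin n) ℂ)
    (hWdef : W = ∑ i, ∑ k, U i * (φ k * (φ k)ᴴ) * (U i)ᴴ) (hW : W.PosDef)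
    (μ : (i : Fin l) → (k : Fin r) → Matrix (Fin n) (Fin (c k)) ℂ)
    (hμ : ∀ i k, μ i k = (hW.posSemidef.sqrt)⁻¹ * (U i * φ k)) :
    (∀ i k, μ i k = U i * ((hW.posSemidef.sqrt)⁻¹ * φ k)) ∧
    (∀ i k, μ i k * (μ i k)ᴴ =
      U i * (((hW.posSemidef.sqrt)⁻¹ * φ k) * ((hW.posSemidef.sqrt)⁻¹ * φ k)ᴴ) * (U i)ᴴ) := by
  set S := hW.posSemidef.sqrt with hS
  -- each U i is unitary
  have hUU : ∀ i, U i * (U i)ᴴ = 1 := fun i => (mem_unitaryGroup_iff.mp (hUunit i))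
  have hUU' : ∀ i, (U i)ᴴ * U i = 1 := fun i => (mem_unitaryGroup_iff'.mp (hUunit i))
  -- conjugation by U i preserves W
  have hconjW : ∀ i, U i * W * (U i)ᴴ = W := by
    intro i
    -- the map j ↦ index of U i * U j is a bijection of Fin l
    have hσ : ∀ j, ∃ t, U i * U j = U t := fun j => hUmul i j
    choose σ hσ using hσ
    have hσinj : Function.Injective σ := by
      intro a b hab
      apply hUinj
      have : U i * U a = U i * U b := by rw [hσ a, hσ b, hab]
      calc U a = (U i)ᴴ * (U i * U a) := by rw [← mul_assoc, hUU' i, one_mul]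
        _ = (U i)ᴴ * (U i * U b) := by rw [this]
        _ = U b := by rw [← mul_assoc, hUU' i, one_mul]
    have hσbij : Function.Bijective σ := Finite.injective_iff_bijective.mp hσinj
    rw [hWdef]
    simp only [Finset.mul_sum, Finset.sum_mul]
    rw [← (Equiv.ofBijective σ hσbij).sum_comp
      (fun t => ∑ k, U t * (φ k * (φ k)ᴴ) * (U t)ᴴ)]
    apply Finset.sum_congr rfl
    intro j _
    apply Finset.sum_congr rfl
    intro k _
    have h : U (Equiv.ofBijective σ hσbij j) = U i * U j := (hσ j).symm
    simp only [h, conjTranspose_mul, Matrix.mul_assoc]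
  -- hence U i * W = W * U i
  have hcommW : ∀ i, U i * W = W * U i := by
    intro i
    calc U i * W = U i * W * ((U i)ᴴ * U i) := by rw [hUU' i, mul_one]
      _ = (U i * W * (U i)ᴴ) * U i := by noncomm_ring
      _ = W * U i := by rw [hconjW i]
  -- S commutes with each U i
  have hcommS : ∀ i, U i * S = S * U i := by
    intro i
    have hps : (U i * S * (U i)ᴴ).PosSemidef := hW.posSemidef.posSemidef_sqrt'.mul_mul_conjTranspose_same (U i)
    have hsq : (U i * S * (U i)ᴴ) ^ 2 = W := by
      rw [pow_two]
      calc U i * S * (U i)ᴴ * (U i * S * (U i)ᴴ)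
          = U i * (S * ((U i)ᴴ * U i) * S) * (U i)ᴴ := by noncomm_ring
        _ = U i * (S * S) * (U i)ᴴ := by rw [hUU' i, mul_one]
        _ = U i * W * (U i)ᴴ := by rw [hW.posSemidef.sqrt_mul_self']
        _ = W := hconjW i
    have := hps.eq_sqrt_of_sq_eq' hW.posSemidef hsq
    rw [← hS] at this
    calc U i * S = U i * S * ((U i)ᴴ * U i) := by rw [hUU' i, mul_one]
      _ = (U i * S * (U i)ᴴ) * U i := by noncomm_ring
      _ = S * U i := by rw [this]
  -- S is invertible
  have hdet : IsUnit S.det := by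
    have h2 : S.det * S.det = W.det := by
      rw [← det_mul, hW.posSemidef.sqrt_mul_self']
    have hWdet : W.det ≠ 0 := hW.det_pos.ne'
    exact isUnit_iff_ne_zero.mpr (fun h => hWdet (by rw [← h2, h, mul_zero]))
  have hSinv : S * S⁻¹ = 1 := mul_nonsing_inv S hdet
  have hSinv' : S⁻¹ * S = 1 := nonsing_inv_mul S hdet
  have hcommSinv : ∀ i, S⁻¹ * U i = U i * S⁻¹ := by
    intro i
    calc S⁻¹ * U i = S⁻¹ * U i * (S * S⁻¹) := by rw [hSinv, mul_one]
      _ = S⁻¹ * (U i * S) * S⁻¹ := by noncomm_ring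
      _ = S⁻¹ * (S * U i) * S⁻¹ := by rw [hcommS i]
      _ = (S⁻¹ * S) * (U i * S⁻¹) := by noncomm_ring
      _ = U i * S⁻¹ := by rw [hSinv', one_mul]
  have h1 : ∀ i k, μ i k = U i * (S⁻¹ * φ k) := by
    intro i k
    rw [hμ i k, ← Matrix.mul_assoc, hcommSinv i, Matrix.mul_assoc]
  refine ⟨h1, ?_⟩
  intro i k
  rw [h1 i k, conjTranspose_mul]
  simp only [Matrix.mul_assoc]
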